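/- Let p be an odd prime, k a positive integer, and let 0 ≤ x < p^k with x ∉ S_p^k. Write x = Σ_i d_i p^i in base p and let S = {i : d_i = p-1}. For 0 ≤ j < p-1 define x_j = Σ_i d_i^{(j)} p^i, where d_i^{(j)} = d_i if i ∉ S and d_i^{(j)} = j if i ∈ S. Then x_0 < x_1 < ... < x_{p-2} < x is an arithmetic progression, and each x_j lies in S_p^k; in particular the canonical covering {x_0, ..., x_{p-2}} is contained in S_p^k and p-covers x. -/

import Mathlib

open scoped Classical

/-- A set of naturals is `p`-free if it contains no `p`-term arithmetic
progression with positive common difference. -/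
def IsPFree (p : ℕ) (A : Set ℕ) : Prop :=
  ¬ ∃ a d : ℕ, 0 < d ∧ ∀ i < p, a + i * d ∈ A

/-- `A` `p`-covers `x`: there are `x₁ < x₂ < ⋯ < x_{p-1}` in `A` such that
`x₁, …, x_{p-1}, x` is an arithmetic progression. -/
def PCovers (p : ℕ) (A : Set ℕ) (x : ℕ) : Prop :=
  ∃ a d : ℕ, 0 < d ∧ (∀ i < p - 1, a + i * d ∈ A) ∧ a + (p - 1) * d = x

/-- The set of naturals `≤ n` accepted by the greedy algorithm generating the
`p`-Stanley sequence of `A`: an integer is accepted if it belongs to `A`, or if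
it exceeds every element of `A` and adjoining it to the previously accepted
integers keeps the set `p`-free. -/
noncomputable def stanleyUpTo (p : ℕ) (A : Set ℕ) : ℕ → Set ℕ
  | 0 => if 0 ∈ A ∨ ((∀ a ∈ A, a < 0) ∧ IsPFree p {0}) then {0} else ∅
  | n + 1 =>
      if n + 1 ∈ A ∨ ((∀ a ∈ A, a < n + 1) ∧
          IsPFree p (insert (n + 1) (stanleyUpTo p A n))) then
        insert (n + 1) (stanleyUpTo p A n)
      else stanleyUpTo p A n

/-- The `p`-Stanley sequence generated by `A`, as a set of naturals. -/
def StanleySeq (p : ℕ) (A : Set ℕ) : Set ℕ := {x | x ∈ stanleyUpTo p A x}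

/-- `A ⊆ {0, 1, …, N-1}` `p`-covers `x` mod `N`: there are
`x₁ < x₂ < ⋯ < x_{p-1}` in `A` such that `x₁, …, x_{p-1}, x` or
`x₁, …, x_{p-1}, x + N` is an arithmetic progression. -/
def PCoversMod (p N : ℕ) (A : Set ℕ) (x : ℕ) : Prop :=
  ∃ a d : ℕ, 0 < d ∧ (∀ i < p - 1, a + i * d ∈ A) ∧
    (a + (p - 1) * d = x ∨ a + (p - 1) * d = x + N)

/-- `A` is `p`-free mod `N`: `A` contains no `p`-term arithmetic progression
modulo `N` with nonzero common difference. -/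
def IsPFreeMod (p N : ℕ) (A : Set ℕ) : Prop :=
  ¬ ∃ a d : ZMod N, d ≠ 0 ∧ ∀ i : ℕ, i < p → ∃ x ∈ A, (x : ZMod N) = a + (i : ZMod N) * d

/-- `A ⊆ {0, 1, …, N-1}` is a modular `p`-free set mod `N`: it contains `0`,
is `p`-free mod `N`, and `p`-covers mod `N` every `x` with `0 ≤ x < N`, `x ∉ A`. -/
def IsModularPFree (p N : ℕ) (A : Set ℕ) : Prop :=
  A ⊆ Set.Iio N ∧ 0 ∈ A ∧ IsPFreeMod p N A ∧
    ∀ x < N, x ∉ A → PCoversMod p N A x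

/-!
The numbers with no base-`p` digit `p - 1` form a `p`-free set: if `d = p^v e` with `p ∤ e`,
the `v`-th digits of `a + j d` for `j < p` run through all residues mod `p`, so one of them is
`p - 1`. Conversely a number `x` having such digits is `p`-covered by the smaller numbers `x_j`,
which have none: replacing each digit `p - 1` by `j` is affine in `j`, with difference
`∑_{i ∈ S} p^i`, and gives `x` back at `j = p - 1`. Hence the greedy algorithm started at `{0}`
accepts exactly the numbers without digit `p - 1`, i.e. `S_p(0)` is that set, and the theorem is
a restatement of the properties of the `x_j`.
-/

open Finset

theorem IsPFree.mono {p : ℕ} {A B : Set ℕ} (hB : IsPFree p B) (hAB : A ⊆ B) : IsPFree p A :=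
  fun ⟨a, d, hd, hA⟩ => hB ⟨a, d, hd, fun i hi => hAB (hA i hi)⟩

theorem PCovers.not_isPFree_insert {p x : ℕ} {A : Set ℕ} (h : PCovers p A x) :
    ¬ IsPFree p (insert x A) := by
  obtain ⟨a, d, hd, hA, rfl⟩ := h
  refine fun hfree => hfree ⟨a, d, hd, fun i hi => ?_⟩
  rcases Nat.lt_or_ge i (p - 1) with hi' | hi'
  · exact Or.inr (hA i hi')
  · exact Or.inl (by rw [show i = p - 1 by omega])

section Digits

variable {p : ℕ}

theorem sum_mul_pow_lt {k : ℕ} {c : ℕ → ℕ} (hc : ∀ i < k, c i < p) :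
    ∑ i ∈ range k, c i * p ^ i < p ^ k := by
  induction k with
  | zero => simp
  | succ n ih =>
    have hcn : (c n + 1) * p ^ n ≤ p ^ (n + 1) := by
      rw [pow_succ']; exact Nat.mul_le_mul_right _ (hc n n.lt_succ_self)
    rw [sum_range_succ]
    have := ih fun i hi => hc i (by omega)
    nlinarith

theorem sum_mul_pow_div_pow_mod {k : ℕ} {c : ℕ → ℕ} (hc : ∀ i < k, c i < p) (t : ℕ) :
    (∑ i ∈ range k, c i * p ^ i) / p ^ t % p = if t < k then c t else 0 := by
  induction k generalizing c t with
  | zero => simp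
  | succ k ih =>
    have hc0 := hc 0 k.succ_pos
    have hsum : ∑ i ∈ range (k + 1), c i * p ^ i
        = c 0 + p * ∑ i ∈ range k, c (i + 1) * p ^ i := by
      rw [sum_range_succ', mul_sum, pow_zero, mul_one, add_comm]
      exact congrArg _ (sum_congr rfl fun i _ => by ring)
    have ih' := ih (c := fun i => c (i + 1)) (fun i hi => hc (i + 1) (by omega))
    rcases t with _ | t
    · simp [hsum, Nat.mod_eq_of_lt hc0]
    · rw [hsum, pow_succ', ← Nat.div_div_eq_div_mul, Nat.add_mul_div_left _ _ (by omega),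
        Nat.div_eq_of_lt hc0, zero_add, ih']
      simp

theorem sum_div_pow_mod_mul_pow {k x : ℕ} (hx : x < p ^ k) :
    ∑ i ∈ range k, x / p ^ i % p * p ^ i = x := by
  induction k generalizing x with
  | zero => simp_all
  | succ k ih =>
    have hp : 0 < p := Nat.pos_of_ne_zero fun h => by simp [h] at hx
    have hxp : x / p < p ^ k := by
      rw [Nat.div_lt_iff_lt_mul hp, ← pow_succ]; exact hx
    rw [sum_range_succ']
    simp only [pow_succ', ← Nat.div_div_eq_div_mul]
    simp only [mul_left_comm _ p, ← mul_sum, ih hxp]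
    simpa [add_comm] using Nat.div_add_mod x p

end Digits

def topDigitFree (p : ℕ) : Set ℕ := {m | ∀ i, m / p ^ i % p ≠ p - 1}

theorem exists_lt_add_mul_mod_eq {p e : ℕ} (hp : p.Prime) (he : ¬ p ∣ e) (q : ℕ) {r : ℕ}
    (hr : r < p) : ∃ j < p, (q + j * e) % p = r := by
  have := Fact.mk hp
  have he' : (e : ZMod p) ≠ 0 := by rwa [Ne, ZMod.natCast_eq_zero_iff]
  set j := (((r : ZMod p) - q) * (e : ZMod p)⁻¹).val
  have hj : ((q + j * e : ℕ) : ZMod p) = r := by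
    push_cast
    rw [ZMod.natCast_val, ZMod.cast_id, mul_assoc, inv_mul_cancel₀ he']
    ring
  exact ⟨j, ZMod.val_lt _, by rw [← ZMod.val_natCast, hj, ZMod.val_natCast_of_lt hr]⟩

theorem isPFree_topDigitFree {p : ℕ} (hp : p.Prime) : IsPFree p (topDigitFree p) := by
  rintro ⟨a, d, hd, hmem⟩
  set v := d.factorization p
  obtain ⟨j, hj, hjmod⟩ := exists_lt_add_mul_mod_eq hp (Nat.not_dvd_ordCompl hp hd.ne')
    (a / p ^ v) (Nat.sub_lt hp.pos one_pos)
  refine hmem j hj v ?_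
  have hsplit : a + j * d = a % p ^ v + p ^ v * (a / p ^ v + j * (d / p ^ v)) := by
    conv_lhs => rw [← Nat.mod_add_div a (p ^ v), ← Nat.ordProj_mul_ordCompl_eq_self d p]
    ring
  have hpv : 0 < p ^ v := pow_pos hp.pos v
  rw [hsplit, Nat.add_mul_div_left _ _ hpv, Nat.div_eq_of_lt (Nat.mod_lt _ hpv), zero_add, hjmod]

section CanonicalCovering

variable {p k x : ℕ}

/-- The paper's `x_j`. -/
def replaceTopDigits (p k x j : ℕ) : ℕ :=
  ∑ i ∈ range k, (if x / p ^ i % p = p - 1 then j else x / p ^ i % p) * p ^ i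

def topDigitMask (p k x : ℕ) : ℕ :=
  ∑ i ∈ range k, if x / p ^ i % p = p - 1 then p ^ i else 0

theorem replaceTopDigits_eq (j : ℕ) :
    replaceTopDigits p k x j = replaceTopDigits p k x 0 + j * topDigitMask p k x := by
  rw [replaceTopDigits, replaceTopDigits, topDigitMask, mul_sum, ← sum_add_distrib]
  refine sum_congr rfl fun i _ => ?_
  split_ifs <;> simp

theorem replaceTopDigits_pred (hx : x < p ^ k) : replaceTopDigits p k x (p - 1) = x := by
  conv_rhs => rw [← sum_div_pow_mod_mul_pow hx]
  refine sum_congr rfl fun i _ => ?_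
  split_ifs with h <;> simp [h]

theorem replaceTopDigits_lt {j : ℕ} (hj : j < p) : replaceTopDigits p k x j < p ^ k :=
  sum_mul_pow_lt fun i _ => by split_ifs <;> first | exact hj | exact Nat.mod_lt _ (by omega)

theorem replaceTopDigits_mem_topDigitFree {j : ℕ} (hj : j < p - 1) :
    replaceTopDigits p k x j ∈ topDigitFree p := by
  intro t
  rw [replaceTopDigits, sum_mul_pow_div_pow_mod
    fun i _ => by split_ifs <;> first | omega | exact Nat.mod_lt _ (by omega)]
  split_ifs <;> omega

theorem topDigitMask_pos (hp : 2 ≤ p) (hx : x < p ^ k) (hxS : x ∉ topDigitFree p) :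
    0 < topDigitMask p k x := by
  refine Nat.pos_of_ne_zero fun h0 => hxS ?_
  have hconst := replaceTopDigits_eq (p := p) (k := k) (x := x) (p - 1)
  rw [h0, mul_zero, add_zero, replaceTopDigits_pred hx] at hconst
  exact hconst ▸ replaceTopDigits_mem_topDigitFree (by omega)

theorem strictMono_replaceTopDigits (hp : 2 ≤ p) (hx : x < p ^ k) (hxS : x ∉ topDigitFree p) :
    StrictMono (replaceTopDigits p k x) := fun i j hij => by
  rw [replaceTopDigits_eq i, replaceTopDigits_eq j]
  have := Nat.mul_lt_mul_of_pos_right hij (topDigitMask_pos hp hx hxS)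
  omega

theorem pCovers_image_replaceTopDigits (hp : 2 ≤ p) (hx : x < p ^ k)
    (hxS : x ∉ topDigitFree p) :
    PCovers p (replaceTopDigits p k x '' Set.Iio (p - 1)) x :=
  ⟨replaceTopDigits p k x 0, topDigitMask p k x, topDigitMask_pos hp hx hxS,
    fun i hi => ⟨i, hi, replaceTopDigits_eq i⟩,
    by rw [← replaceTopDigits_eq, replaceTopDigits_pred hx]⟩

end CanonicalCovering

theorem stanleyUpTo_zero {p : ℕ} (hp : p.Prime) (n : ℕ) :
    stanleyUpTo p {0} n = {m | m ∈ topDigitFree p ∧ m ≤ n} := by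
  induction n with
  | zero =>
    have h0 : 0 ∈ topDigitFree p := fun i => by have := hp.two_le; simp; omega
    ext m
    simp only [stanleyUpTo, Set.mem_singleton_iff, true_or, if_true, Set.mem_ofPred_eq,
      Nat.le_zero]
    exact ⟨fun hm => ⟨hm ▸ h0, hm⟩, And.right⟩
  | succ n ih =>
    rw [stanleyUpTo, ih]
    by_cases hn : n + 1 ∈ topDigitFree p
    · have hins : insert (n + 1) {m | m ∈ topDigitFree p ∧ m ≤ n}
          = {m | m ∈ topDigitFree p ∧ m ≤ n + 1} := by
        ext m
        simp only [Set.mem_insert_iff, Set.mem_ofPred_eq]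
        constructor
        · rintro (rfl | ⟨hm, hmn⟩) <;> [exact ⟨hn, le_rfl⟩; exact ⟨hm, by omega⟩]
        · rintro ⟨hm, hmn⟩
          rcases Nat.lt_or_ge m (n + 1) with h | h
          · exact Or.inr ⟨hm, by omega⟩
          · exact Or.inl (by omega)
      rw [hins, if_pos (Or.inr ⟨by simp, (isPFree_topDigitFree hp).mono fun m hm => hm.1⟩)]
    · have hcover : PCovers p {m | m ∈ topDigitFree p ∧ m ≤ n} (n + 1) := by
        have hlt : n + 1 < p ^ (n + 1) := Nat.lt_pow_self hp.one_lt
        obtain ⟨a, d, hd, hA, hx⟩ := pCovers_image_replaceTopDigits hp.two_le hlt hn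
        refine ⟨a, d, hd, fun i hi => ?_, hx⟩
        obtain ⟨j, hj, hji⟩ := hA i hi
        have := strictMono_replaceTopDigits hp.two_le hlt hn hj
        rw [replaceTopDigits_pred hlt] at this
        exact hji ▸ ⟨replaceTopDigits_mem_topDigitFree hj, by omega⟩
      rw [if_neg (by simpa using hcover.not_isPFree_insert)]
      ext m
      simp only [Set.mem_ofPred_eq]
      refine ⟨fun ⟨hm, hmn⟩ => ⟨hm, by omega⟩, fun ⟨hm, hmn⟩ => ⟨hm, ?_⟩⟩
      rcases hmn.lt_or_eq with h | rfl
      · omega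
      · contradiction

theorem stanleySeq_zero {p : ℕ} (hp : p.Prime) : StanleySeq p {0} = topDigitFree p := by
  ext m
  simp [StanleySeq, stanleyUpTo_zero hp]

theorem canonical_covering_general (p k x : ℕ) (hp : p.Prime)
    (hxlt : x < p ^ k)
    (hx : x ∉ {y | y ∈ StanleySeq p {0} ∧ y < p ^ k})
    (d : ℕ → ℕ) (hd : ∀ i, d i = x / p ^ i % p)
    (xj : ℕ → ℕ)
    (hxj : ∀ j, xj j =
      ∑ i ∈ Finset.range k, (if d i = p - 1 then j else d i) * p ^ i) :
    StrictMonoOn xj (Set.Iio (p - 1)) ∧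
    xj (p - 2) < x ∧
    (∃ Δ : ℕ, 0 < Δ ∧ (∀ j < p - 1, xj j = xj 0 + j * Δ) ∧
      x = xj 0 + (p - 1) * Δ) ∧
    (∀ j < p - 1, xj j ∈ {y | y ∈ StanleySeq p {0} ∧ y < p ^ k}) ∧
    PCovers p (xj '' Set.Iio (p - 1)) x := by
  rw [stanleySeq_zero hp] at hx ⊢
  have hxS : x ∉ topDigitFree p := fun h => hx ⟨h, hxlt⟩
  obtain rfl : xj = replaceTopDigits p k x := funext fun j => by simp only [hxj, hd]; rfl
  have hmono := strictMono_replaceTopDigits hp.two_le hxlt hxS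
  refine ⟨hmono.strictMonoOn _, ?_, ⟨topDigitMask p k x, topDigitMask_pos hp.two_le hxlt hxS,
    fun j _ => replaceTopDigits_eq j, ?_⟩, fun j hj => ⟨replaceTopDigits_mem_topDigitFree hj,
    replaceTopDigits_lt (by omega)⟩, pCovers_image_replaceTopDigits hp.two_le hxlt hxS⟩
  · calc replaceTopDigits p k x (p - 2) < replaceTopDigits p k x (p - 1) :=
          hmono (by have := hp.two_le; omega)
      _ = x := replaceTopDigits_pred hxlt
  · rw [← replaceTopDigits_eq, replaceTopDigits_pred hxlt]

/-- The canonical covering: for `x < p^k` with `x ∉ S_p^k`,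
writing `x = Σ dᵢ pⁱ` in base `p` and replacing every digit equal to `p-1`
by `j` gives numbers `x₀ < x₁ < ⋯ < x_{p-2} < x` forming, together with `x`,
an arithmetic progression; each `x_j` lies in `S_p^k`, so the canonical
covering is contained in `S_p^k` and `p`-covers `x`. -/
theorem canonical_covering (p k x : ℕ) (hp : p.Prime) (hodd : Odd p)
    (hk : 0 < k) (hxlt : x < p ^ k)
    (hx : x ∉ {y | y ∈ StanleySeq p {0} ∧ y < p ^ k})
    (d : ℕ → ℕ) (hd : ∀ i, d i = x / p ^ i % p)
    (xj : ℕ → ℕ)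
    (hxj : ∀ j, xj j =
      ∑ i ∈ Finset.range k, (if d i = p - 1 then j else d i) * p ^ i) :
    StrictMonoOn xj (Set.Iio (p - 1)) ∧
    xj (p - 2) < x ∧
    (∃ Δ : ℕ, 0 < Δ ∧ (∀ j < p - 1, xj j = xj 0 + j * Δ) ∧
      x = xj 0 + (p - 1) * Δ) ∧
    (∀ j < p - 1, xj j ∈ {y | y ∈ StanleySeq p {0} ∧ y < p ^ k}) ∧
    PCovers p (xj '' Set.Iio (p - 1)) x :=
  canonical_covering_general p k x hp hxlt hx d hd xj hxj
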